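/- arXiv:2604.10828 — 3 statements merged into one kernel-verified Lean document; each statement's English description precedes it below -/
import Mathlib

section
/- Let D(p_i, r_i) and D(p_j, r_j) be two disjoint disks whose centers lie on a common horizontal line with p_i strictly to the left of p_j. Then the additively weighted bisector γ_ij = { q : |q p_i| - r_i = |q p_j| - r_j } is a y-monotone curve: for every real number y there exists exactly one point of γ_ij with that y-coordinate. -/
open Metric Set
open scoped RealInnerProductSpace

noncomputable section

abbrev Pt : Type := EuclideanSpace ℝ (Fin 2)

/-- A closed disk in the plane, given by a center and a radius. -/
structure Disk : Type where
  center : Pt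
  radius : ℝ

instance : DecidableEq Disk := Classical.decEq _

/-- The set of points of a disk (a closed ball). -/
def Disk.pts (D : Disk) : Set Pt := Metric.closedBall D.center D.radius

/-- The signed distance from a point `q` to a disk: `|q p| - r`. -/
def Disk.sd (D : Disk) (q : Pt) : ℝ := dist q D.center - D.radius

/-- Two disks are disjoint if the distance between their centers exceeds the sum of radii. -/
def Disk.Disj (D E : Disk) : Prop := D.radius + E.radius < dist D.center E.center

/-- The union of the points of a set of disks. -/
def diskUnion (𝒟 : Set Disk) : Set Pt := ⋃ D ∈ 𝒟, D.pts

/-- The convex hull of a set of disks. -/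
def diskHull (𝒟 : Set Disk) : Set Pt := convexHull ℝ (diskUnion 𝒟)

/-- The part of the boundary circle of `D` appearing on the boundary of the convex hull
of the disks of `𝒟`. -/
def hullArc (𝒟 : Set Disk) (D : Disk) : Set Pt :=
  Metric.sphere D.center D.radius ∩ frontier (diskHull 𝒟)

/-- Convex position: every disk's boundary contributes (at least) a point to the hull boundary. -/
def ConvexPos (𝒟 : Set Disk) : Prop := ∀ D ∈ 𝒟, (hullArc 𝒟 D).Nonempty

/-- Strongly convex position: every disk's boundary contributes exactly one maximal (nonempty)
arc to the hull boundary, i.e. its trace on the hull boundary is nonempty and connected. -/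
def StronglyConvexPos (𝒟 : Set Disk) : Prop := ∀ D ∈ 𝒟, IsConnected (hullArc 𝒟 D)

/-- An independent set of disks: pairwise disjoint. -/
def IndepSet (𝒟 : Set Disk) : Prop := ∀ A ∈ 𝒟, ∀ B ∈ 𝒟, A ≠ B → A.Disj B

/-- A strongly convex independent set. -/
def StronglyConvexIndep (𝒟 : Set Disk) : Prop := StronglyConvexPos 𝒟 ∧ IndepSet 𝒟

/-- Cross product (orientation test) of `a - o` and `b - o`. -/
def cross (o a b : Pt) : ℝ := (a 0 - o 0) * (b 1 - o 1) - (a 1 - o 1) * (b 0 - o 0)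

/-- `a, b, c` appear in strictly counterclockwise angular order around `o`. -/
def ccw3 (o a b c : Pt) : Prop := 0 < cross o a b ∧ 0 < cross o b c ∧ 0 < cross o c a

/-- `Dm` lies strictly between `Da` and `Db` in the counterclockwise order of the disks
along the boundary of the convex hull of `𝒟`. -/
def CCWBetween (𝒟 : Set Disk) (Da Dm Db : Disk) : Prop :=
  ∃ o ∈ interior (diskHull 𝒟), ∀ qa ∈ hullArc 𝒟 Da, ∀ qm ∈ hullArc 𝒟 Dm,
    ∀ qb ∈ hullArc 𝒟 Db, ccw3 o qa qm qb

/-- A point regarded as a radius-zero disk. -/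
def pointDisk (p : Pt) : Disk := ⟨p, 0⟩

/-- `m` is the midpoint of the circular arc `A` of a circle centered at `c`: some nonidentity
isometric involution of the plane (a reflection) fixes `c` and `m` and maps `A` onto itself. -/
def IsArcMidpoint (c : Pt) (A : Set Pt) (m : Pt) : Prop :=
  m ∈ A ∧ ∃ f : Pt ≃ᵢ Pt, f c = c ∧ f m = m ∧ (∀ x, f (f x) = x) ∧
    f ≠ IsometryEquiv.refl Pt ∧ f '' A = A

/-!
On the line at height `y`, a point `q` of the bisector satisfies `|q pᵢ| - |q pⱼ| = d` with
`d = rᵢ - rⱼ`, and disjointness of the (nonnegative-radius) disks gives `|d| < |pᵢ pⱼ|`. So the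
bisector is one branch of a hyperbola with foci `pᵢ`, `pⱼ`, whose point at height `y` can be written
down explicitly. It is the only one: on the branch `d * |q pᵢ|` is an affine function of `q` with
slope `pⱼ - pᵢ`. For two such points on a line parallel to `pᵢ pⱼ` this makes `|d|` times the
difference of their distances to `pᵢ` equal to `|pᵢ pⱼ|` times their distance, which the triangle
inequality and `|d| < |pᵢ pⱼ|` only allow when the points coincide.
-/

theorem eq_of_dist_sub_dist_eq_of_sub_eq_smul {E : Type*} [NormedAddCommGroup E]
    [InnerProductSpace ℝ E] {p p' q₁ q₂ : E} {c d : ℝ} (hd : |d| < dist p p')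
    (hq : q₁ - q₂ = c • (p' - p)) (h₁ : dist q₁ p - dist q₁ p' = d)
    (h₂ : dist q₂ p - dist q₂ p' = d) : q₁ = q₂ := by
  have focus : ∀ q, dist q p - dist q p' = d →
      d * (2 * dist q p - d) = 2 * ⟪q, p' - p⟫ + ‖p‖ ^ 2 - ‖p'‖ ^ 2 := by
    intro q h
    simp only [dist_eq_norm] at h ⊢
    linear_combination (d - ‖q - p‖ - ‖q - p'‖) * h + norm_sub_sq_real q p
      - norm_sub_sq_real q p' - 2 * inner_sub_right (𝕜 := ℝ) q p' p
  have key : d * (dist q₁ p - dist q₂ p) = c * dist p p' ^ 2 := by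
    have hinner : ⟪q₁ - q₂, p' - p⟫ = c * dist p p' ^ 2 := by
      rw [hq, real_inner_smul_left, real_inner_self_eq_norm_sq, dist_comm, dist_eq_norm]
    linear_combination (focus q₁ h₁ - focus q₂ h₂) / 2 - inner_sub_left (𝕜 := ℝ) q₁ q₂ (p' - p)
      + hinner
  have lip : |dist q₁ p - dist q₂ p| ≤ |c| * dist p p' := by
    calc |dist q₁ p - dist q₂ p| ≤ dist q₁ q₂ := abs_dist_sub_le q₁ q₂ p
      _ = |c| * dist p p' := by rw [dist_eq_norm, hq, norm_smul, Real.norm_eq_abs, dist_comm,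
          dist_eq_norm]
  have hc : c = 0 := by
    have hpos : 0 < dist p p' := (abs_nonneg d).trans_lt hd
    have : |c| * dist p p' * (dist p p' - |d|) ≤ 0 := by
      have := congrArg abs key
      rw [abs_mul, abs_mul, abs_pow, abs_dist] at this
      nlinarith [mul_le_mul_of_nonneg_left lip (abs_nonneg d), abs_nonneg c]
    by_contra hc
    have := mul_pos (mul_pos (abs_pos.2 hc) hpos) (sub_pos.2 hd)
    linarith
  rwa [hc, zero_smul, sub_eq_zero] at hq

theorem EuclideanSpace.dist_sq_eq_fin_two (q p : EuclideanSpace ℝ (Fin 2)) :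
    dist q p ^ 2 = (q 0 - p 0) ^ 2 + (q 1 - p 1) ^ 2 := by
  rw [EuclideanSpace.dist_sq_eq, Fin.sum_univ_two, Real.dist_eq, Real.dist_eq, sq_abs, sq_abs]

theorem EuclideanSpace.sub_eq_smul_sub_of_apply_one_eq {q₁ q₂ p p' : EuclideanSpace ℝ (Fin 2)}
    (hq : q₁ 1 = q₂ 1) (hp : p 1 = p' 1) (hpp' : p 0 ≠ p' 0) :
    q₁ - q₂ = ((q₁ 0 - q₂ 0) / (p' 0 - p 0)) • (p' - p) := by
  have : p' 0 - p 0 ≠ 0 := sub_ne_zero.2 hpp'.symm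
  ext i
  fin_cases i <;> simp [hq, hp, this]

theorem EuclideanSpace.exists_apply_one_eq_and_dist_sub_dist_eq
    {p p' : EuclideanSpace ℝ (Fin 2)} {d : ℝ}
    (hp : p 1 = p' 1) (hd : |d| < p' 0 - p 0) (y : ℝ) :
    ∃ q : EuclideanSpace ℝ (Fin 2), q 1 = y ∧ dist q p - dist q p' = d := by
  set L := p' 0 - p 0
  have hL : 0 < L := (abs_nonneg d).trans_lt hd
  have hdL : 0 < L ^ 2 - d ^ 2 := sub_pos.2 (sq_lt_sq' (neg_lt_of_abs_lt hd) (lt_of_abs_lt hd))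
  -- `q` is the point at height `y` of the hyperbola branch
  -- `t ↦ ((p 0 + p' 0) / 2 + d / 2 * cosh t, p 1 + √(L ^ 2 - d ^ 2) / 2 * sinh t)`; `R = cosh t`.
  set R := √(1 + 4 * (y - p 1) ^ 2 / (L ^ 2 - d ^ 2))
  have hR1 : 1 ≤ R := Real.one_le_sqrt.2 (by simp only [le_add_iff_nonneg_right]; positivity)
  have hR : (R ^ 2 - 1) * (L ^ 2 - d ^ 2) = 4 * (y - p 1) ^ 2 := by
    rw [Real.sq_sqrt (by positivity)]
    field_simp
    ring
  have hLR : L ≤ L * R := le_mul_of_one_le_right hL.le hR1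
  set q : EuclideanSpace ℝ (Fin 2) := !₂[(p 0 + p' 0) / 2 + d * R / 2, y]
  have hq₀ : q 0 = (p 0 + p' 0) / 2 + d * R / 2 := rfl
  have hq₁ : q 1 = y := rfl
  have hqp : dist q p = (d + L * R) / 2 := by
    refine (sq_eq_sq₀ dist_nonneg (by linarith [neg_abs_le d])).1 ?_
    rw [EuclideanSpace.dist_sq_eq_fin_two, hq₀, hq₁]
    linear_combination (-1 / 4) * hR
  have hqp' : dist q p' = (L * R - d) / 2 := by
    refine (sq_eq_sq₀ dist_nonneg (by linarith [le_abs_self d])).1 ?_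
    rw [EuclideanSpace.dist_sq_eq_fin_two, hq₀, hq₁, ← hp]
    linear_combination (-1 / 4) * hR
  exact ⟨q, hq₁, by rw [hqp, hqp']; ring⟩

/-- the additively weighted bisector of two disjoint disks with centers on a
common horizontal line is a y-monotone curve: each horizontal level contains exactly one
point of the bisector. -/
theorem stmt2 (pi pj : Pt) (ri rj : ℝ) (hri : 0 ≤ ri) (hrj : 0 ≤ rj)
    (hy : pi 1 = pj 1) (hx : pi 0 < pj 0) (hdisj : ri + rj < dist pi pj) :
    ∀ y : ℝ, ∃! q : Pt, q 1 = y ∧ dist q pi - ri = dist q pj - rj := by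
  intro y
  have hdist : dist pi pj = pj 0 - pi 0 := by
    refine (sq_eq_sq₀ dist_nonneg (by linarith)).1 ?_
    rw [EuclideanSpace.dist_sq_eq_fin_two, hy]
    ring
  have hd : |ri - rj| < dist pi pj := abs_sub_lt_iff.2 ⟨by linarith, by linarith⟩
  obtain ⟨q, hq₁, hq⟩ :=
    EuclideanSpace.exists_apply_one_eq_and_dist_sub_dist_eq hy (hdist ▸ hd) y
  refine ⟨q, ⟨hq₁, by linarith⟩, fun q' ⟨hq₁', hq'⟩ => ?_⟩
  exact eq_of_dist_sub_dist_eq_of_sub_eq_smul hd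
    (EuclideanSpace.sub_eq_smul_sub_of_apply_one_eq (hq₁'.trans hq₁.symm) hy hx.ne)
    (by linarith) hq
end
end

section
/- Let D' be a finite set of at least two disks in the plane in strongly convex position, and let D be a disk of D' whose boundary arc on the convex hull of D' is nonempty. Let q be a point on that arc of ∂D lying on the boundary of the convex hull of D' that does not belong to any other disk of D'. Then the ray emanating from q in the direction away from the center of D is entirely contained in the additively weighted Voronoi cell of D; that is, every point on this ray is strictly closer (in signed distance |·p| - r) to D than to any other disk of D'. -/
open Metric Set
open scoped RealInnerProductSpace

noncomputable section

/-!
At `q` the hull has a supporting line, which is tangent to `D`; hence the whole hull, and with it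
every other disk `E`, lies in the half-plane `⟪q - p, ·⟫ ≤ ⟪q - p, q⟫`. A point `x = q + t (q - p)`
of the ray is at distance `t r` beyond that line, so by Cauchy–Schwarz its distance to the center
of `E` is at least `r_E + t r`, i.e. `sd_E x ≥ t r = sd_D x`. Equality would force `q` to be the
point of `E` nearest to `x`, contradicting `q ∉ E`.
-/

section InnerProductSpace

variable {V : Type*} [NormedAddCommGroup V] [InnerProductSpace ℝ V]

lemma inner_add_mul_norm_le_of_closedBall {v c : V} {s a : ℝ} (hs : 0 ≤ s)
    (h : ∀ y ∈ closedBall c s, ⟪v, y⟫ ≤ a) : ⟪v, c⟫ + s * ‖v‖ ≤ a := by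
  have hmem : c + (s / ‖v‖) • v ∈ closedBall c s := by
    rw [mem_closedBall, dist_eq_norm, add_sub_cancel_left, norm_smul, Real.norm_eq_abs,
      abs_of_nonneg (by positivity)]
    rcases eq_or_ne ‖v‖ 0 with hv | hv
    · simp [hv, hs]
    · rw [div_mul_cancel₀ _ hv]
  have := h _ hmem
  rw [inner_add_right, real_inner_smul_right, real_inner_self_eq_norm_sq] at this
  rcases eq_or_ne ‖v‖ 0 with hv | hv
  · simpa [hv] using this
  · convert this using 2
    field_simp

/-- `hsupp` says that `closedBall c s` lies in the half-space `⟪v, ·⟫ ≤ ⟪v, q⟫`. -/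
lemma lt_dist_add_smul_of_inner_le {v q c : V} {s t : ℝ} (hs : 0 ≤ s)
    (hsupp : ⟪v, c⟫ + s * ‖v‖ ≤ ⟪v, q⟫) (hqc : s < dist q c) :
    s + t * ‖v‖ < dist (q + t • v) c := by
  rcases eq_or_ne v 0 with rfl | hv
  · simpa using hqc
  set z := q + t • v - c
  have hinner : (s + t * ‖v‖) * ‖v‖ ≤ ⟪v, z⟫ := by
    have : ⟪v, z⟫ = ⟪v, q⟫ - ⟪v, c⟫ + t * ‖v‖ ^ 2 := by
      rw [inner_sub_right, inner_add_right, real_inner_smul_right, real_inner_self_eq_norm_sq]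
      ring
    nlinarith
  have hcs : ⟪v, z⟫ ≤ ‖v‖ * ‖z‖ := real_inner_le_norm v z
  have hvpos : 0 < ‖v‖ := norm_pos_iff.2 hv
  rw [dist_eq_norm]
  refine lt_of_le_of_ne (le_of_mul_le_mul_right (by linarith) hvpos) fun heq => ?_
  -- equality in Cauchy–Schwarz forces `z` to point along `v`, hence `‖v‖ • (q - c) = s • v`
  have hpar : ‖z‖ • v = ‖v‖ • z := inner_eq_norm_mul_iff_real.1 (by nlinarith)
  have hqc' : ‖v‖ • (q - c) = s • v := by
    have : q - c = z - t • v := by simp only [z]; abel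
    rw [this, smul_sub, ← hpar, ← heq, smul_smul, ← sub_smul]
    congr 1
    ring
  have := congrArg norm hqc'
  rw [norm_smul, norm_smul, Real.norm_eq_abs, Real.norm_eq_abs, abs_of_nonneg hvpos.le,
    abs_of_nonneg hs, ← dist_eq_norm, mul_comm] at this
  exact hqc.ne' (mul_right_cancel₀ hvpos.ne' this)

lemma Convex.inner_le_of_closedBall_subset [CompleteSpace V] {K : Set V} {p q : V} {r : ℝ}
    (hK : Convex ℝ K) (hball : closedBall p r ⊆ K) (hq : dist q p = r) (hqK : q ∉ interior K) :
    ∀ y ∈ K, ⟪q - p, y⟫ ≤ ⟪q - p, q⟫ := by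
  rcases (dist_nonneg.trans_eq hq).eq_or_lt with rfl | hr
  · simp [dist_eq_zero.1 hq]
  have hp : p ∈ interior K :=
    interior_maximal (ball_subset_closedBall.trans hball) isOpen_ball (mem_ball_self hr)
  obtain ⟨f, hf0, hf⟩ := geometric_hahn_banach_of_nonempty_interior_point hK hqK ⟨p, hp⟩
  set w := (InnerProductSpace.toDual ℝ V).symm f
  have hw : ∀ y, ⟪w, y⟫ = f y := fun y => InnerProductSpace.toDual_symm_apply
  have hwpos : 0 < ‖w‖ := by simpa [w, norm_pos_iff] using hf0
  have hsupp : ∀ y ∈ K, ⟪w, y⟫ ≤ ⟪w, q⟫ := fun y hy => by simpa only [hw] using hf y hy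
  have hball' := inner_add_mul_norm_le_of_closedBall hr.le fun y hy => hsupp y (hball hy)
  have hnorm : ‖q - p‖ = r := by rw [← dist_eq_norm, hq]
  have hpar : r • w = ‖w‖ • (q - p) := by
    rw [← hnorm]
    refine inner_eq_norm_mul_iff_real.1 (le_antisymm (real_inner_le_norm _ _) ?_)
    rw [inner_sub_right, hnorm]
    linarith
  intro y hy
  have hwy : ⟪w, y - q⟫ ≤ 0 := by rw [inner_sub_right]; linarith [hsupp y hy]
  have key : ‖w‖ * ⟪q - p, y - q⟫ = r * ⟪w, y - q⟫ := by
    rw [← real_inner_smul_left, ← real_inner_smul_left, hpar]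
  have hpy : ⟪q - p, y - q⟫ ≤ 0 := by
    refine le_of_mul_le_mul_left ?_ hwpos
    rw [key, mul_zero]
    exact mul_nonpos_of_nonneg_of_nonpos hr.le hwy
  rwa [inner_sub_right, sub_nonpos] at hpy

end InnerProductSpace

lemma Disk.pts_subset_diskHull {S : Set Disk} {D : Disk} (hD : D ∈ S) : D.pts ⊆ diskHull S :=
  (subset_biUnion_of_mem hD).trans (subset_convexHull ℝ _)

theorem stmt3_general (S : Set Disk)
    (hsc : StronglyConvexPos S) (D : Disk) (hD : D ∈ S)
    (q : Pt) (hq : q ∈ hullArc S D) (hout : ∀ E ∈ S, E ≠ D → q ∉ E.pts) :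
    ∀ t : ℝ, 0 ≤ t → ∀ E ∈ S, E ≠ D →
      D.sd (q + t • (q - D.center)) < E.sd (q + t • (q - D.center)) := by
  intro t ht E hE hne
  have hnormal := (convex_convexHull ℝ _).inner_le_of_closedBall_subset
    (Disk.pts_subset_diskHull hD) hq.1 hq.2.2
  have hs : 0 ≤ E.radius := by
    obtain ⟨qE, hqE⟩ := (hsc E hE).nonempty
    exact dist_nonneg.trans_eq hqE.1
  have hqE : E.radius < dist q E.center := not_le.1 (hout E hE hne)
  have hfar := lt_dist_add_smul_of_inner_le (t := t) hs
    (inner_add_mul_norm_le_of_closedBall hs fun y hy =>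
      hnormal y (Disk.pts_subset_diskHull hE hy)) hqE
  have hnorm : ‖q - D.center‖ = D.radius := by rw [← dist_eq_norm]; exact hq.1
  have hD' : dist (q + t • (q - D.center)) D.center = (1 + t) * D.radius := by
    rw [dist_eq_norm, show q + t • (q - D.center) - D.center = (1 + t) • (q - D.center) by
      rw [add_smul, one_smul]; abel, norm_smul, hnorm, Real.norm_of_nonneg (by linarith)]
  rw [hnorm] at hfar
  simp only [Disk.sd, hD']
  linarith

/-- the ray from a hull-arc point of a disk `D`, emanating away from the center
of `D`, stays strictly closer (in signed distance) to `D` than to any other disk. -/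
theorem stmt3 (S : Set Disk) (hfin : S.Finite) (hcard : 2 ≤ S.ncard)
    (hsc : StronglyConvexPos S) (D : Disk) (hD : D ∈ S)
    (q : Pt) (hq : q ∈ hullArc S D) (hout : ∀ E ∈ S, E ≠ D → q ∉ E.pts) :
    ∀ t : ℝ, 0 ≤ t → ∀ E ∈ S, E ≠ D →
      D.sd (q + t • (q - D.center)) < E.sd (q + t • (q - D.center)) :=
  stmt3_general S hsc D hD q hq hout
end
end

section
/- Let D_i and D_l be two disjoint disks, and let v be a point equidistant in signed distance from D_i and D_l, i.e., |v p_i| - r_i = |v p_l| - r_l > 0. Let c_l be the point where the segment from the center p_l to v crosses the boundary of D_l (the tangency point of D_l with the disk centered at v). Then c_l does not lie on the boundary of the convex hull of D_i ∪ D_l. -/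
open Metric Set
open scoped RealInnerProductSpace

noncomputable section

/-- for disjoint disks `Di, Dl` and a point `v` equidistant from them in signed
distance (and outside them), the tangency point `c_l` of `Dl` with the disk centered at `v`
does not lie on the boundary of the convex hull of `Di ∪ Dl`. -/
theorem stmt15 (Di Dl : Disk) (hri : 0 ≤ Di.radius) (hrl : 0 < Dl.radius)
    (hdisj : Di.Disj Dl) (v : Pt)
    (heq : Di.sd v = Dl.sd v) (hpos : 0 < Dl.sd v) :
    Dl.center + (Dl.radius / dist v Dl.center) • (v - Dl.center) ∉
      frontier (convexHull ℝ (Di.pts ∪ Dl.pts)) := by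
  classical
  set p := Dl.center with hpdef
  set r := Dl.radius with hrdef
  set q := Di.center with hqdef
  set s := Di.radius with hsdef
  have hpos' : r < dist v p := by
    have := hpos; unfold Disk.sd at this; linarith
  have hd : 0 < dist v p := lt_trans hrl hpos'
  set d := dist v p with hddef
  set e : Pt := v - p with hedef
  have hdn : d = ‖e‖ := dist_eq_norm v p
  have hee : ⟪e, e⟫ = d ^ 2 := by
    rw [real_inner_self_eq_norm_sq, ← hdn]
  set K := ⟪e, q - p⟫ with hKdef
  have hD : s + r < ‖q - p‖ := by
    have h := hdisj; unfold Disk.Disj at h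
    rwa [dist_eq_norm] at h
  have hvq : dist v q = d - r + s := by
    have := heq; unfold Disk.sd at this; linarith
  have hexp : (d - r + s) ^ 2 = d ^ 2 - 2 * K + ‖q - p‖ ^ 2 := by
    have h1 : v - q = e - (q - p) := by rw [hedef]; abel
    calc (d - r + s) ^ 2 = ‖v - q‖ ^ 2 := by rw [← dist_eq_norm, hvq]
      _ = ‖e - (q - p)‖ ^ 2 := by rw [h1]
      _ = ‖e‖ ^ 2 - 2 * ⟪e, q - p⟫ + ‖q - p‖ ^ 2 := norm_sub_sq_real _ _
      _ = d ^ 2 - 2 * K + ‖q - p‖ ^ 2 := by rw [← hdn, ← hKdef]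
  have hKgt : d * (r - s) < K := by
    nlinarith [mul_pos (show (0:ℝ) < ‖q - p‖ - (r - s) by linarith)
      (show (0:ℝ) < ‖q - p‖ + (r - s) by linarith)]
  set c : Pt := p + (r / d) • e with hcdef
  set y : Pt := q + (s / d) • e with hydef
  have hy : y ∈ Di.pts := by
    show y ∈ Metric.closedBall q s
    rw [Metric.mem_closedBall, dist_eq_norm]
    have h1 : y - q = (s / d) • e := by rw [hydef]; abel
    rw [h1, norm_smul, Real.norm_eq_abs, abs_of_nonneg (div_nonneg hri hd.le), ← hdn]
    rw [div_mul_cancel₀ s hd.ne']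
  set w : Pt := y - c with hwdef
  have hwc : w = (q - p) + ((s - r) / d) • e := by
    rw [hwdef, hydef, hcdef]
    module
  have hew : ⟪e, w⟫ = K + (s - r) * d := by
    rw [hwc, inner_add_right, real_inner_smul_right, hee, ← hKdef]
    field_simp
  have hew_pos : 0 < ⟪e, w⟫ := by rw [hew]; nlinarith [hKgt]
  have hw0 : w ≠ 0 := by
    intro h; rw [h, inner_zero_right] at hew_pos; exact lt_irrefl 0 hew_pos
  have hwn : 0 < ‖w‖ ^ 2 := pow_pos (norm_pos_iff.mpr hw0) 2
  set t := (r / d) * ⟪e, w⟫ / ‖w‖ ^ 2 with htdef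
  have ht : 0 < t := div_pos (mul_pos (div_pos hrl hd) hew_pos) hwn
  set x : Pt := c - t • w with hxdef
  have hxp : x - p = (r / d) • e - t • w := by rw [hxdef, hcdef]; abel
  have hlt : ‖x - p‖ ^ 2 < r ^ 2 := by
    have e1 : ‖x - p‖ ^ 2 = (r / d) ^ 2 * d ^ 2 - 2 * ((r / d) * t * ⟪e, w⟫)
        + t ^ 2 * ‖w‖ ^ 2 := by
      rw [hxp, norm_sub_sq_real, norm_smul, norm_smul, real_inner_smul_left,
        real_inner_smul_right, Real.norm_eq_abs, Real.norm_eq_abs,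
        mul_pow, mul_pow, sq_abs, sq_abs, ← hdn]
      ring
    rw [e1]
    have h2 : (r / d) ^ 2 * d ^ 2 = r ^ 2 := by field_simp
    have h3 : t * ‖w‖ ^ 2 = (r / d) * ⟪e, w⟫ := by
      rw [htdef]; field_simp
    have h4 : t ^ 2 * ‖w‖ ^ 2 = t * ((r / d) * ⟪e, w⟫) := by
      rw [← h3]; ring
    have h5 : r / d * t * ⟪e, w⟫ = t * ((r / d) * ⟪e, w⟫) := by ring
    linarith [h2, h4, h5, mul_pos ht (mul_pos (div_pos hrl hd) hew_pos)]
  have hxball : x ∈ Metric.ball p r := by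
    rw [Metric.mem_ball, dist_eq_norm]
    exact lt_of_pow_lt_pow_left₀ 2 hrl.le hlt
  have h1t : (0:ℝ) < 1 + t := by linarith
  have hsum : x + t • y = (1 + t) • c := by
    rw [hxdef, hwdef]; module
  have hcomb : (1 + t)⁻¹ • x + ((1 + t)⁻¹ * t) • y = c := by
    rw [mul_smul, ← smul_add, hsum, smul_smul, inv_mul_cancel₀ h1t.ne', one_smul]
  have hsubI : Metric.ball p r ⊆ interior (convexHull ℝ (Di.pts ∪ Dl.pts)) := by
    rw [← interior_closedBall p (ne_of_gt hrl)]
    apply interior_mono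
    exact Set.Subset.trans (Set.subset_union_right) (subset_convexHull ℝ _)
  have hyc : y ∈ convexHull ℝ (Di.pts ∪ Dl.pts) :=
    subset_convexHull ℝ _ (Set.mem_union_left _ hy)
  have hcint : c ∈ interior (convexHull ℝ (Di.pts ∪ Dl.pts)) := by
    have hconv := convex_convexHull ℝ (Di.pts ∪ Dl.pts)
    have ha : 0 < (1 + t)⁻¹ := inv_pos.mpr h1t
    have hb : 0 ≤ (1 + t)⁻¹ * t := le_of_lt (mul_pos ha ht)
    have hab : (1 + t)⁻¹ + (1 + t)⁻¹ * t = 1 := by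
      rw [← mul_one_add, inv_mul_cancel₀ h1t.ne']
    have := hconv.combo_interior_self_mem_interior (hsubI hxball) hyc ha hb hab
    rwa [hcomb] at this
  intro hf
  exact hf.2 hcint
end
end
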